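/- Let X\r be split into the sublists A (elements positive on a regular vector u) and B (elements negative on u). Then the function P_{X\r}^{F} defined as the signed shifted convolution of geometric series, P_{X\r}^{F} = (-1)^{|B|} τ_{-Σ_{b∈B} b} (Π_{a∈A} Σ_{k≥0} δ_{ka}) * (Π_{b∈B} Σ_{k≥0} δ_{-kb}), is the unique function on Γ satisfying ∇_{X\r} P_{X\r}^{F} = δ₀ with support contained in -Σ_{b∈B} b + C(A, -B), where C(A,-B) is the cone generated by A and -B. -/

import Mathlib

open Function

attribute [local instance] Classical.propDecidable

noncomputable section

/-- The lattice `Γ = ι → ℤ`. -/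
abbrev ZLat (ι : Type*) := ι → ℤ
/-- The ambient real vector space `V = Γ ⊗ ℝ = ι → ℝ`. -/
abbrev Amb (ι : Type*) := ι → ℝ

variable {ι : Type*} [Fintype ι]

/-- Embedding of the lattice into the ambient space. -/
def castV (γ : ZLat ι) : Amb ι := fun i => (γ i : ℝ)

/-- Standard pairing on `V`. -/
def dotR (u v : Amb ι) : ℝ := ∑ i, u i * v i

/-- The difference operator `∇ₐ`. -/
def nab (a : ZLat ι) (f : ZLat ι → ℤ) : ZLat ι → ℤ := fun b => f b - f (b - a)

/-- `∇_Y = ∏_{a ∈ Y} ∇ₐ` for a list `Y`. -/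
def nabL (Y : List (ZLat ι)) (f : ZLat ι → ℤ) : ZLat ι → ℤ := Y.foldr nab f

/-- Delta function at `0`. -/
def delta0 : ZLat ι → ℤ := fun γ => if γ = 0 then 1 else 0

/-- The partition function of a list `Y`: the number of ways of writing `γ` as a
nonnegative integral combination of the entries of `Y`. -/
def partFn (Y : List (ZLat ι)) : ZLat ι → ℤ :=
  fun γ => Nat.card {k : Fin Y.length → ℕ // ∑ i, (k i : ℤ) • Y.get i = γ}

/-- The cone `C(Y)` of nonnegative real combinations of the entries of `Y`. -/
def coneC (Y : List (ZLat ι)) : Set (Amb ι) :=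
  {v | ∃ t : Fin Y.length → ℝ, (∀ i, 0 ≤ t i) ∧ v = ∑ i, t i • castV (Y.get i)}

/-- `C(Y)` is pointed: it contains no line. -/
def PointedList (Y : List (ZLat ι)) : Prop :=
  ∀ v ∈ coneC Y, -v ∈ coneC Y → v = 0

/-- The zonotope `B(Y) = {∑ tᵢ aᵢ : 0 ≤ tᵢ ≤ 1}`. -/
def zono (Y : List (ZLat ι)) : Set (Amb ι) :=
  {v | ∃ t : Fin Y.length → ℝ, (∀ i, 0 ≤ t i ∧ t i ≤ 1) ∧ v = ∑ i, t i • castV (Y.get i)}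

/-- The real span of a list of lattice vectors. -/
def spanOf (Y : List (ZLat ι)) : Submodule ℝ (Amb ι) :=
  Submodule.span ℝ (castV '' {a | a ∈ Y})

/-- A subspace is rational (relative to `X`) if it is spanned by a sublist of `X`. -/
def IsRational (X : List (ZLat ι)) (r : Submodule ℝ (Amb ι)) : Prop :=
  ∃ Y : List (ZLat ι), (∀ a ∈ Y, a ∈ X) ∧ r = spanOf Y

/-- The sublist `X ∩ r`. -/
def inSub (X : List (ZLat ι)) (r : Submodule ℝ (Amb ι)) : List (ZLat ι) :=
  X.filter (fun a => decide (castV a ∈ r))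

/-- The sublist `X \ r`. -/
def outSub (X : List (ZLat ι)) (r : Submodule ℝ (Amb ι)) : List (ZLat ι) :=
  X.filter (fun a => decide (castV a ∉ r))

/-- The operator `∇_{X \ r}`. -/
def nabOut (X : List (ZLat ι)) (r : Submodule ℝ (Amb ι)) (f : ZLat ι → ℤ) : ZLat ι → ℤ :=
  nabL (outSub X r) f

/-- The space `𝓕(X)`: `∇_{X\r} f` is supported on `Γ ∩ r` for every rational `r`. -/
def memF (X : List (ZLat ι)) (f : ZLat ι → ℤ) : Prop :=
  ∀ r, IsRational X r → support (nabOut X r f) ⊆ {γ | castV γ ∈ r}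

/-- The Dahmen–Micchelli space of a list `Y` (inside its span): `f` is killed by
`∇_{Y \ H}` for every rational hyperplane `H` of the span of `Y`. -/
def memDM (Y : List (ZLat ι)) (f : ZLat ι → ℤ) : Prop :=
  ∀ H, IsRational Y H → Module.finrank ℝ H + 1 = Module.finrank ℝ (spanOf Y) →
    nabOut Y H f = 0

/-- `𝓕(X ∩ r)`, viewed as functions on `Γ` supported on `Γ ∩ r`. -/
def memFrel (X : List (ZLat ι)) (r : Submodule ℝ (Amb ι)) (g : ZLat ι → ℤ) : Prop :=
  support g ⊆ {γ | castV γ ∈ r} ∧ memF (inSub X r) g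

/-- `DM(X ∩ r)`, viewed as functions on `Γ` supported on `Γ ∩ r`. -/
def memDMrel (X : List (ZLat ι)) (r : Submodule ℝ (Amb ι)) (g : ZLat ι → ℤ) : Prop :=
  support g ⊆ {γ | castV γ ∈ r} ∧ memDM (inSub X r) g

/-- `u` is a regular vector for `X \ r`:  `u ∈ r^⊥` and `⟨u, a⟩ ≠ 0` for all `a ∈ X \ r`.
It determines the regular face `F` containing it. -/
def Reg (X : List (ZLat ι)) (r : Submodule ℝ (Amb ι)) (u : Amb ι) : Prop :=
  (∀ v ∈ r, dotR u v = 0) ∧ ∀ a ∈ X, castV a ∉ r → dotR u (castV a) ≠ 0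

/-- The sublist `B ⊆ X \ r` of elements negative on `u`. -/
def negPart (X : List (ZLat ι)) (r : Submodule ℝ (Amb ι)) (u : Amb ι) : List (ZLat ι) :=
  (outSub X r).filter (fun a => decide (dotR u (castV a) < 0))

/-- The list `[A, -B]`: entries of `X \ r`, with sign flipped on the part negative on `u`. -/
def signedOut (X : List (ZLat ι)) (r : Submodule ℝ (Amb ι)) (u : Amb ι) : List (ZLat ι) :=
  (outSub X r).map (fun a => if 0 < dotR u (castV a) then a else -a)

/-- The special function `𝓟_{X\r}^F` for the face `F ∋ u`:
`(-1)^{|B|} τ_{-∑_{b∈B} b} (∏_{a∈A} ∑_k δ_{ka}) * (∏_{b∈B} ∑_k δ_{-kb})`. -/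
def PF (X : List (ZLat ι)) (r : Submodule ℝ (Amb ι)) (u : Amb ι) : ZLat ι → ℤ :=
  fun γ => (-1) ^ (negPart X r u).length *
    partFn (signedOut X r u) (γ + (negPart X r u).sum)

/-- The support region `-∑_{b∈B} b + C(A, -B)` of `𝓟_{X\r}^F`, as a subset of `Γ`. -/
def PFsupp (X : List (ZLat ι)) (r : Submodule ℝ (Amb ι)) (u : Amb ι) : Set (ZLat ι) :=
  {γ | castV (γ + (negPart X r u).sum) ∈ coneC (signedOut X r u)}

/-- Convolution of two functions on the lattice. -/
def conv (f g : ZLat ι → ℤ) : ZLat ι → ℤ := fun γ => ∑ᶠ μ, f (γ - μ) * g μ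

/-- The union of all rational hyperplanes (inside the span of `Y`). -/
def hyperUnion (Y : List (ZLat ι)) : Set (Amb ι) :=
  {v | ∃ H, IsRational Y H ∧ Module.finrank ℝ H + 1 = Module.finrank ℝ (spanOf Y) ∧ v ∈ H}

/-- A tope for `Y`: a connected component of the complement (in the span of `Y`) of the
union of the hyperplanes spanned by sublists of `Y`. -/
def IsTope (Y : List (ZLat ι)) (τ : Set (Amb ι)) : Prop :=
  ∃ v ∈ (spanOf Y : Set (Amb ι)) \ hyperUnion Y,
    τ = connectedComponentIn ((spanOf Y : Set (Amb ι)) \ hyperUnion Y) v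

/-- The set of singular vectors: the union of the cones `C(Y)` over sublists `Y` of `X`
not spanning `V`. -/
def singSet (X : List (ZLat ι)) : Set (Amb ι) :=
  {v | ∃ Y : List (ZLat ι), (∀ a ∈ Y, a ∈ X) ∧ spanOf Y ≠ ⊤ ∧ v ∈ coneC Y}

/-- A big cell: a connected component of the complement of the set of singular vectors. -/
def IsBigCell (X : List (ZLat ι)) (c : Set (Amb ι)) : Prop :=
  ∃ v ∈ (singSet X)ᶜ, c = connectedComponentIn (singSet X)ᶜ v

/-- Minkowski difference of sets, `A - B`. -/
def sdiffSet (A B : Set (Amb ι)) : Set (Amb ι) := {x | ∃ a ∈ A, ∃ b ∈ B, x = a - b}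

/-! Since `∇_{-b} f = ∇_b (-τ_b f)`, the signs and the shift in `𝓟_{X\r}^F` turn `∇_{X\r}` into
`∇_{[A, -B]}`. The partition function of `[A, -B]` is a fundamental solution of the latter:
`⟨u, ·⟩` is positive on `[A, -B]`, so every count is finite, and splitting off the first vector
`c` gives `∇_c (partFn (c :: W)) = partFn W`. Both `𝓟_{X\r}^F` and any `f` with the stated
support vanish where `⟨u, ·⟩` is small, and a function annihilated by `∇_a` is `a`-periodic, so
when `⟨u, a⟩ ≠ 0`, `⟨u, ·⟩` is bounded below on its support only if it vanishes. -/

section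

variable {ι : Type*}

def dotHom [Fintype ι] (u : Amb ι) : ZLat ι →+ ℝ where
  toFun γ := dotR u (castV γ)
  map_zero' := by simp [dotR, castV]
  map_add' x y := by simp [dotR, castV, mul_add, Finset.sum_add_distrib]

@[simp] theorem dotHom_apply [Fintype ι] (u : Amb ι) (γ : ZLat ι) :
    dotHom u γ = dotR u (castV γ) := rfl

theorem dotR_sum_smul [Fintype ι] {m : Type*} [Fintype m] (u : Amb ι) (t : m → ℝ) (w : m → Amb ι) :
    dotR u (∑ i, t i • w i) = ∑ i, t i * dotR u (w i) := by
  simp only [dotR, Finset.sum_apply, Pi.smul_apply, smul_eq_mul, Finset.mul_sum]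
  rw [Finset.sum_comm]
  exact Finset.sum_congr rfl fun i _ => Finset.sum_congr rfl fun j _ => by ring

theorem castV_sum_smul {m : Type*} [Fintype m] (k : m → ℕ) (v : m → ZLat ι) :
    castV (∑ i, (k i : ℤ) • v i) = ∑ i, (k i : ℝ) • castV (v i) := by
  funext j
  simp [castV]

theorem dotR_nonneg_of_mem_coneC [Fintype ι] {Y : List (ZLat ι)} {u v : Amb ι}
    (hY : ∀ c ∈ Y, 0 ≤ dotR u (castV c)) (hv : v ∈ coneC Y) : 0 ≤ dotR u v := by
  obtain ⟨t, ht, rfl⟩ := hv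
  rw [dotR_sum_smul]
  exact Finset.sum_nonneg fun i _ => mul_nonneg (ht i) (hY _ (List.get_mem Y i))

section Difference

theorem nabL_cons (a : ZLat ι) (Z : List (ZLat ι)) (f : ZLat ι → ℤ) :
    nabL (a :: Z) f = nab a (nabL Z f) := rfl

theorem nabL_comm_of_nab_comm {T : (ZLat ι → ℤ) → ZLat ι → ℤ}
    (hT : ∀ a f, T (nab a f) = nab a (T f)) (Z : List (ZLat ι)) (f : ZLat ι → ℤ) :
    nabL Z (T f) = T (nabL Z f) := by
  induction Z with
  | nil => rfl
  | cons a Z ih => rw [nabL_cons, ih, nabL_cons, hT]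

theorem nab_comm (a b : ZLat ι) (f : ZLat ι → ℤ) : nab a (nab b f) = nab b (nab a f) := by
  funext γ
  simp only [nab, sub_right_comm _ a b]
  ring

theorem nab_neg_shift (a b : ZLat ι) (f : ZLat ι → ℤ) :
    nab a (fun γ => -f (γ + b)) = fun γ => -nab a f (γ + b) := by
  funext γ
  simp only [nab, sub_add_eq_add_sub]
  ring

theorem nab_neg (a : ZLat ι) (f : ZLat ι → ℤ) : nab (-a) f = nab a (fun γ => -f (γ + a)) := by
  funext γ
  simp only [nab, sub_neg_eq_add, sub_add_cancel]
  ring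

theorem nabL_sub (Z : List (ZLat ι)) (f g : ZLat ι → ℤ) :
    nabL Z (f - g) = nabL Z f - nabL Z g := by
  induction Z with
  | nil => rfl
  | cons a Z ih =>
    rw [nabL_cons, ih, nabL_cons, nabL_cons]
    funext γ
    simp only [nab, Pi.sub_apply]
    ring

theorem nabL_signed_shift (p : ZLat ι → Bool) (L : List (ZLat ι)) (P : ZLat ι → ℤ) :
    nabL L (fun γ => (-1) ^ (L.filter p).length * P (γ + (L.filter p).sum)) =
      nabL (L.map fun a => if p a then -a else a) P := by
  induction L with
  | nil => simp [nabL]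
  | cons a L ih =>
    by_cases ha : p a
    · set G : ZLat ι → ℤ := fun γ => (-1) ^ (L.filter p).length * P (γ + (L.filter p).sum)
      have hshift : (fun γ => (-1) ^ ((a :: L).filter p).length * P (γ + ((a :: L).filter p).sum))
          = fun γ => -G (γ + a) := by
        funext γ
        simp only [List.filter_cons_of_pos ha, List.length_cons, List.sum_cons, G, add_assoc]
        ring
      rw [hshift, nabL_cons, nabL_comm_of_nab_comm (T := fun f γ => -f (γ + a))
        (fun b f => (nab_neg_shift b a f).symm),
        ← nab_neg, ih, List.map_cons, if_pos ha, nabL_cons]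
    · rw [List.filter_cons_of_neg ha, nabL_cons, ih, List.map_cons, if_neg ha, nabL_cons]

end Difference

section Partition

def vectorPartitions (Y : List (ZLat ι)) (γ : ZLat ι) : Set (Fin Y.length → ℕ) :=
  {k | ∑ i, (k i : ℤ) • Y.get i = γ}

theorem mem_vectorPartitions {Y : List (ZLat ι)} {γ : ZLat ι} {k : Fin Y.length → ℕ} :
    k ∈ vectorPartitions Y γ ↔ ∑ i, (k i : ℤ) • Y.get i = γ := Iff.rfl

theorem partFn_eq_ncard (Y : List (ZLat ι)) (γ : ZLat ι) :
    partFn Y γ = (vectorPartitions Y γ).ncard := by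
  rw [partFn, ← Nat.card_coe_set_eq]
  rfl

theorem sum_get_cons (c : ZLat ι) (W : List (ZLat ι)) (k : Fin (c :: W).length → ℕ) :
    ∑ i, (k i : ℤ) • (c :: W).get i = (k 0 : ℤ) • c + ∑ i, (k i.succ : ℤ) • W.get i :=
  Fin.sum_univ_succ _

theorem vectorPartitions_finite [Fintype ι] (φ : ZLat ι →+ ℝ) {Y : List (ZLat ι)}
    (hY : ∀ c ∈ Y, 0 < φ c) (γ : ZLat ι) : (vectorPartitions Y γ).Finite := by
  have hpos (i : Fin Y.length) : 0 < φ (Y.get i) := hY _ (List.get_mem Y i)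
  refine (Set.Finite.pi fun i => Set.finite_Iic ⌈φ γ / φ (Y.get i)⌉₊).subset ?_
  intro k hk i _
  have hsum : ∑ j, (k j : ℝ) * φ (Y.get j) = φ γ := by
    rw [← mem_vectorPartitions.1 hk, map_sum]
    exact Finset.sum_congr rfl fun j _ => by rw [map_zsmul, zsmul_eq_mul, Int.cast_natCast]
  have hle : (k i : ℝ) * φ (Y.get i) ≤ φ γ :=
    hsum ▸ Finset.single_le_sum (fun j _ => mul_nonneg (Nat.cast_nonneg _) (hpos j).le)
      (Finset.mem_univ i)
  exact Nat.cast_le.mp (((le_div_iff₀ (hpos i)).2 hle).trans (Nat.le_ceil _))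

theorem partFn_nil [Fintype ι] : partFn ([] : List (ZLat ι)) = delta0 := by
  funext γ
  have hempty : vectorPartitions [] γ = {_k | 0 = γ} := by
    ext k
    simp [vectorPartitions]
  rw [partFn_eq_ncard, hempty, delta0]
  split_ifs with h
  · simp [h]
  · simp [Ne.symm h]

theorem vectorPartitions_cons_inter_eq (c : ZLat ι) (W : List (ZLat ι)) (γ : ZLat ι) :
    vectorPartitions (c :: W) γ ∩ {k | k 0 = 0} = Fin.cons 0 '' vectorPartitions W γ := by
  ext k
  constructor
  · rintro ⟨hk, h0 : k 0 = 0⟩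
    refine ⟨Fin.tail k, ?_, by rw [← h0, Fin.cons_self_tail]⟩
    rw [mem_vectorPartitions, sum_get_cons, h0] at hk
    simpa only [mem_vectorPartitions, Fin.tail, Nat.cast_zero, zero_smul, zero_add] using hk
  · rintro ⟨k, hk, rfl⟩
    refine ⟨?_, Fin.cons_zero _ _⟩
    rw [mem_vectorPartitions, sum_get_cons]
    simpa only [Fin.cons_zero, Fin.cons_succ, Nat.cast_zero, zero_smul, zero_add] using
      mem_vectorPartitions.1 hk

theorem vectorPartitions_cons_sdiff_eq (c : ZLat ι) (W : List (ZLat ι)) (γ : ZLat ι) :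
    vectorPartitions (c :: W) γ \ {k | k 0 = 0} =
      (· + Pi.single 0 1) '' vectorPartitions (c :: W) (γ - c) := by
  ext k
  constructor
  · rintro ⟨hk, h0 : k 0 ≠ 0⟩
    have hk0 : k 0 - 1 + 1 = k 0 := Nat.sub_add_cancel (Nat.one_le_iff_ne_zero.2 h0)
    have hrestore : k - Pi.single 0 1 + Pi.single 0 1 = k := by
      funext i
      cases i using Fin.cases <;> simp [hk0]
    refine ⟨k - Pi.single 0 1, ?_, hrestore⟩
    rw [mem_vectorPartitions, ← hrestore, sum_get_cons] at hk
    rw [mem_vectorPartitions, sum_get_cons, ← hk]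
    simp only [Pi.add_apply, Pi.single_eq_same, ne_eq, Fin.succ_ne_zero, not_false_eq_true,
      Pi.single_eq_of_ne, add_zero, Nat.cast_add, Nat.cast_one, add_smul, one_smul]
    abel
  · rintro ⟨k, hk, rfl⟩
    refine ⟨?_, by simp⟩
    rw [mem_vectorPartitions, sum_get_cons] at hk ⊢
    simp only [Pi.add_apply, Pi.single_eq_same, ne_eq, Fin.succ_ne_zero, not_false_eq_true,
      Pi.single_eq_of_ne, add_zero, Nat.cast_add, Nat.cast_one, add_smul, one_smul]
    rw [← sub_add_cancel γ c, ← hk]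
    abel

theorem partFn_cons {c : ZLat ι} {W : List (ZLat ι)} {γ : ZLat ι}
    (hfin : (vectorPartitions (c :: W) γ).Finite) :
    partFn (c :: W) γ = partFn W γ + partFn (c :: W) (γ - c) := by
  rw [partFn_eq_ncard, partFn_eq_ncard, partFn_eq_ncard,
    ← Set.ncard_inter_add_ncard_sdiff_eq_ncard _ {k | k 0 = 0} hfin,
    vectorPartitions_cons_inter_eq, vectorPartitions_cons_sdiff_eq,
    Set.ncard_image_of_injective _ (Fin.cons_right_injective _),
    Set.ncard_image_of_injective _ (add_left_injective _)]
  push_cast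
  rfl

theorem nabL_partFn [Fintype ι] (φ : ZLat ι →+ ℝ) :
    ∀ {Y : List (ZLat ι)}, (∀ c ∈ Y, 0 < φ c) → nabL Y (partFn Y) = delta0
  | [], _ => partFn_nil
  | c :: W, hY => by
    have hnab : nab c (partFn (c :: W)) = partFn W := by
      funext γ
      rw [nab, partFn_cons (vectorPartitions_finite φ hY γ), add_sub_cancel_right]
    rw [nabL_cons, ← nabL_comm_of_nab_comm (nab_comm c), hnab,
      nabL_partFn φ fun a ha => hY a (List.mem_cons_of_mem c ha)]

theorem castV_mem_coneC_of_partFn_ne_zero {Y : List (ZLat ι)} {γ : ZLat ι}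
    (h : partFn Y γ ≠ 0) : castV γ ∈ coneC Y := by
  rw [partFn_eq_ncard, Nat.cast_ne_zero] at h
  obtain ⟨k, hk⟩ := Set.nonempty_of_ncard_ne_zero h
  exact ⟨fun i => k i, fun i => Nat.cast_nonneg _,
    by rw [← mem_vectorPartitions.1 hk, castV_sum_smul]⟩

end Partition

section BoundedBelow

theorem exists_int_mul_lt {x : ℝ} (hx : x ≠ 0) (t : ℝ) : ∃ n : ℤ, n * x < t := by
  rcases hx.lt_or_gt with hneg | hpos
  · obtain ⟨n, hn⟩ := exists_int_gt (t / x)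
    exact ⟨n, (div_lt_iff_of_neg hneg).1 hn⟩
  · obtain ⟨n, hn⟩ := exists_int_lt (t / x)
    exact ⟨n, (lt_div_iff₀ hpos).1 hn⟩

variable (φ : ZLat ι →+ ℝ)

theorem bddBelow_image_support_nab {a : ZLat ι} {h : ZLat ι → ℤ}
    (hb : BddBelow (φ '' support h)) : BddBelow (φ '' support (nab a h)) := by
  obtain ⟨m, hm⟩ := hb
  refine ⟨min m (m + φ a), ?_⟩
  rintro _ ⟨γ, hγ, rfl⟩
  by_cases h0 : h γ = 0
  · have hshift : h (γ - a) ≠ 0 := fun h1 => hγ (by simp [nab, h0, h1])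
    have := hm ⟨γ - a, hshift, rfl⟩
    rw [map_sub] at this
    exact (min_le_right _ _).trans (by linarith)
  · exact (min_le_left _ _).trans (hm ⟨γ, h0, rfl⟩)

theorem bddBelow_image_support_nabL (Z : List (ZLat ι)) {h : ZLat ι → ℤ}
    (hb : BddBelow (φ '' support h)) : BddBelow (φ '' support (nabL Z h)) := by
  induction Z with
  | nil => exact hb
  | cons a Z ih => exact bddBelow_image_support_nab φ ih

theorem eq_zero_of_nab_eq_zero {a : ZLat ι} (ha : φ a ≠ 0) {h : ZLat ι → ℤ} (h0 : nab a h = 0)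
    (hb : BddBelow (φ '' support h)) : h = 0 := by
  have hstep (γ : ZLat ι) : h γ = h (γ - a) := sub_eq_zero.1 (congrFun h0 γ)
  have hperiodic (γ : ZLat ι) (n : ℤ) : h (γ + n • a) = h γ := by
    induction n using Int.induction_on with
    | zero => simp
    | succ n ih => rw [hstep, add_smul, one_smul, ← add_assoc, add_sub_cancel_right, ih]
    | pred n ih => rw [← ih, hstep (γ + -(n : ℤ) • a), sub_smul, one_smul, add_sub_assoc]
  funext γ
  by_contra hγ
  obtain ⟨m, hm⟩ := hb
  obtain ⟨n, hn⟩ := exists_int_mul_lt ha (m - φ γ)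
  have := hm ⟨γ + n • a, by rwa [mem_support, hperiodic], rfl⟩
  rw [map_add, map_zsmul, zsmul_eq_mul] at this
  linarith

theorem eq_zero_of_nabL_eq_zero {Z : List (ZLat ι)} (hZ : ∀ a ∈ Z, φ a ≠ 0) {h : ZLat ι → ℤ}
    (h0 : nabL Z h = 0) (hb : BddBelow (φ '' support h)) : h = 0 := by
  induction Z with
  | nil => exact h0
  | cons a Z ih =>
    refine ih (fun b hb => hZ b (List.mem_cons_of_mem a hb)) ?_
    exact eq_zero_of_nab_eq_zero φ (hZ a List.mem_cons_self) h0
      (bddBelow_image_support_nabL φ Z hb)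

end BoundedBelow

section Regular

variable [Fintype ι] {X : List (ZLat ι)} {r : Submodule ℝ (Amb ι)} {u : Amb ι}

theorem Reg.dotR_ne_zero (hu : Reg X r u) {a : ZLat ι} (ha : a ∈ outSub X r) :
    dotR u (castV a) ≠ 0 := by
  rw [outSub, List.mem_filter, decide_eq_true_iff] at ha
  exact hu.2 a ha.1 ha.2

theorem Reg.signedOut_eq_map (hu : Reg X r u) :
    signedOut X r u =
      (outSub X r).map fun a => if decide (dotR u (castV a) < 0) then -a else a := by
  refine List.map_congr_left fun a ha => ?_
  rcases (hu.dotR_ne_zero ha).lt_or_gt with hneg | hpos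
  · simp [hneg, hneg.not_gt]
  · simp [hpos, hpos.not_gt]

theorem Reg.dotHom_pos_of_mem_signedOut (hu : Reg X r u) {c : ZLat ι}
    (hc : c ∈ signedOut X r u) : 0 < dotHom u c := by
  obtain ⟨a, ha, rfl⟩ := List.mem_map.1 hc
  rcases (hu.dotR_ne_zero ha).lt_or_gt with hneg | hpos
  · rw [if_neg hneg.not_gt, map_neg, neg_pos]
    exact hneg
  · rw [if_pos hpos]
    exact hpos

end Regular

end

theorem PF_characterization_general {ι : Type*} [Fintype ι] (X : List (ZLat ι))
    (r : Submodule ℝ (Amb ι)) (u : Amb ι) (hu : Reg X r u) :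
    (nabOut X r (PF X r u) = delta0 ∧ Function.support (PF X r u) ⊆ PFsupp X r u) ∧
    ∀ f : ZLat ι → ℤ, nabOut X r f = delta0 →
      Function.support f ⊆ PFsupp X r u → f = PF X r u := by
  have hpos (c : ZLat ι) (hc : c ∈ signedOut X r u) : 0 < dotHom u c :=
    hu.dotHom_pos_of_mem_signedOut hc
  have hnabPF : nabOut X r (PF X r u) = delta0 := by
    unfold nabOut PF _root_.negPart
    rw [nabL_signed_shift, ← hu.signedOut_eq_map]
    exact nabL_partFn (dotHom u) hpos
  have hsuppPF : support (PF X r u) ⊆ PFsupp X r u := fun γ hγ =>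
    castV_mem_coneC_of_partFn_ne_zero (right_ne_zero_of_mul hγ)
  have hbdd : BddBelow (dotHom u '' PFsupp X r u) := by
    refine ⟨-dotHom u (negPart X r u).sum, ?_⟩
    rintro _ ⟨γ, hγ, rfl⟩
    have := dotR_nonneg_of_mem_coneC (fun c hc => (hpos c hc).le) hγ
    rw [← dotHom_apply, map_add] at this
    linarith
  refine ⟨⟨hnabPF, hsuppPF⟩, fun f hf hfsupp => sub_eq_zero.1 ?_⟩
  refine eq_zero_of_nabL_eq_zero (dotHom u) (fun a ha => hu.dotR_ne_zero ha) ?_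
    (hbdd.mono (Set.image_mono ((support_sub f _).trans (Set.union_subset hfsupp hsuppPF))))
  rw [nabL_sub]
  exact sub_eq_zero.2 (hf.trans hnabPF.symm)

/-- The function `𝓟_{X\r}^F` given by the explicit signed-shifted-convolution formula is
the unique function on `Γ` with `∇_{X\r} 𝓟_{X\r}^F = δ₀` and support contained in
`-∑_{b∈B} b + C(A, -B)`. -/
theorem PF_characterization {ι : Type*} [Fintype ι] (X : List (ZLat ι))
    (hX0 : ∀ a ∈ X, a ≠ 0) (hspan : spanOf X = ⊤)
    (r : Submodule ℝ (Amb ι)) (hr : IsRational X r) (u : Amb ι) (hu : Reg X r u) :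
    (nabOut X r (PF X r u) = delta0 ∧ Function.support (PF X r u) ⊆ PFsupp X r u) ∧
    ∀ f : ZLat ι → ℤ, nabOut X r f = delta0 →
      Function.support f ⊆ PFsupp X r u → f = PF X r u :=
  PF_characterization_general X r u hu
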